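/- arXiv:1411.4340 — 5 statements merged into one kernel-verified Lean document; each statement's English description precedes it below -/
import Mathlib

section
/- Let a be a binary sequence of period N and m an integer, and let u = a ∥ L^m(a). Then R_u(τ) = 2R_a(τ/2) if τ is even, and R_u(τ) = R_a((τ-1)/2 + m) + R_a((τ+1)/2 - m) if τ is odd. -/
/-- Periodic cross-correlation of binary sequences of period `M`. -/
def corr (M : ℕ) (x y : ZMod M → ZMod 2) (τ : ZMod M) : ℤ :=
  ∑ t ∈ Finset.range M, (-1 : ℤ) ^ ((x (t : ZMod M)).val + (y ((t : ZMod M) + τ)).val)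

/-- Interleaving of two sequences: `(a∥b)(2i)=a(i)`, `(a∥b)(2i+1)=b(i)`. -/
def il (N : ℕ) (a b : ZMod N → ZMod 2) : ZMod (2 * N) → ZMod 2 :=
  fun t => if t.val % 2 = 0 then a ((t.val / 2 : ℕ) : ZMod N)
           else b ((t.val / 2 : ℕ) : ZMod N)

lemma sum_range_zmod {N : ℕ} [NeZero N] (g : ZMod N → ℤ) :
    ∑ t ∈ Finset.range N, g (t : ZMod N) = ∑ x : ZMod N, g x := by
  refine Finset.sum_nbij' (fun t => ((t : ZMod N))) (fun x => x.val) ?_ ?_ ?_ ?_ ?_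
  · intros; exact Finset.mem_univ _
  · intro x _; exact Finset.mem_range.2 (ZMod.val_lt x)
  · intro t ht; exact ZMod.val_cast_of_lt (Finset.mem_range.1 ht)
  · intro x _; exact ZMod.natCast_rightInverse x
  · intros; rfl

lemma corr_shift {N : ℕ} [NeZero N] (a : ZMod N → ZMod 2) (c σ : ZMod N) :
    ∑ t ∈ Finset.range N, (-1 : ℤ) ^ ((a ((t : ZMod N) + c)).val + (a ((t : ZMod N) + c + σ)).val)
      = corr N a a σ := by
  rw [corr,
    sum_range_zmod (fun x => (-1:ℤ)^((a (x + c)).val + (a (x + c + σ)).val)),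
    sum_range_zmod (fun x => (-1:ℤ)^((a x).val + (a (x+σ)).val))]
  exact Fintype.sum_equiv (Equiv.addRight c) _ _ (fun x => rfl)

lemma il_even {N : ℕ} [NeZero N] (a b : ZMod N → ZMod 2) (x : ℤ) :
    il N a b ((2 * x : ℤ) : ZMod (2 * N)) = a ((x : ℤ) : ZMod N) := by
  have hN : NeZero (2 * N) := ⟨by have := NeZero.ne N; omega⟩
  set v := ((2 * x : ℤ) : ZMod (2 * N)).val with hv
  have h1 : (v : ℤ) = (2 * x) % (2 * N) := ZMod.val_intCast _
  have h2 : (2 * N : ℤ) ∣ 2 * x - v := by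
    rw [h1]; exact Int.dvd_self_sub_of_emod_eq rfl
  have hve : (v : ℤ) % 2 = 0 := by
    rw [h1, Int.emod_emod_of_dvd _ (by push_cast; exact Dvd.intro _ rfl)]; omega
  have hv2 : v % 2 = 0 := by omega
  rw [il, if_pos hv2]
  congr 1
  have hhalf : (v : ℤ) = 2 * ((v / 2 : ℕ) : ℤ) := by push_cast; omega
  have hd : (N : ℤ) ∣ x - ((v / 2 : ℕ) : ℤ) := by
    have h3 : (2 : ℤ) * N ∣ 2 * (x - ((v / 2 : ℕ) : ℤ)) := by
      convert h2 using 1; rw [hhalf]; ring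
    exact (mul_dvd_mul_iff_left (two_ne_zero)).mp h3
  rw [← Int.cast_natCast (v / 2), ZMod.intCast_eq_intCast_iff]
  exact Int.modEq_iff_dvd.mpr hd

lemma il_odd {N : ℕ} [NeZero N] (a b : ZMod N → ZMod 2) (x : ℤ) :
    il N a b ((2 * x + 1 : ℤ) : ZMod (2 * N)) = b ((x : ℤ) : ZMod N) := by
  have hN : NeZero (2 * N) := ⟨by have := NeZero.ne N; omega⟩
  set v := ((2 * x + 1 : ℤ) : ZMod (2 * N)).val with hv
  have h1 : (v : ℤ) = (2 * x + 1) % (2 * N) := ZMod.val_intCast _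
  have h2 : (2 * N : ℤ) ∣ 2 * x + 1 - v := by
    rw [h1]; exact Int.dvd_self_sub_of_emod_eq rfl
  have hve : (v : ℤ) % 2 = 1 := by
    rw [h1, Int.emod_emod_of_dvd _ (by push_cast; exact Dvd.intro _ rfl)]; omega
  have hv2 : ¬ (v % 2 = 0) := by omega
  rw [il, if_neg hv2]
  congr 1
  have hhalf : (v : ℤ) = 2 * ((v / 2 : ℕ) : ℤ) + 1 := by push_cast; omega
  have hd : (N : ℤ) ∣ x - ((v / 2 : ℕ) : ℤ) := by
    have h3 : (2 : ℤ) * N ∣ 2 * (x - ((v / 2 : ℕ) : ℤ)) := by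
      convert h2 using 1; rw [hhalf]; ring
    exact (mul_dvd_mul_iff_left (two_ne_zero)).mp h3
  rw [← Int.cast_natCast (v / 2), ZMod.intCast_eq_intCast_iff]
  exact Int.modEq_iff_dvd.mpr hd

lemma sum_range_two_mul (n : ℕ) (f : ℕ → ℤ) :
    ∑ t ∈ Finset.range (2 * n), f t = ∑ i ∈ Finset.range n, (f (2 * i) + f (2 * i + 1)) := by
  induction n with
  | zero => simp
  | succ k ih =>
    rw [show 2 * (k + 1) = (2 * k + 1) + 1 by ring, Finset.sum_range_succ, Finset.sum_range_succ,
      ih, Finset.sum_range_succ]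
    ring

theorem stmt_8 (N : ℕ) (a : ZMod N → ZMod 2) (m : ℤ) (τ : ℤ) :
    (Even τ →
      corr (2 * N) (il N a (fun t => a (t + (m : ZMod N)))) (il N a (fun t => a (t + (m : ZMod N))))
          (τ : ZMod (2 * N)) =
        2 * corr N a a ((τ / 2 : ℤ) : ZMod N)) ∧
    (Odd τ →
      corr (2 * N) (il N a (fun t => a (t + (m : ZMod N)))) (il N a (fun t => a (t + (m : ZMod N))))
          (τ : ZMod (2 * N)) =
        corr N a a (((τ - 1) / 2 + m : ℤ) : ZMod N) + corr N a a (((τ + 1) / 2 - m : ℤ) : ZMod N)) := by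
  obtain rfl | hN0 := Nat.eq_zero_or_pos N
  · constructor <;> intro _ <;> simp [corr]
  haveI : NeZero N := ⟨hN0.ne'⟩
  constructor
  · rintro ⟨s, rfl⟩
    rw [corr, sum_range_two_mul]
    set b : ZMod N → ZMod 2 := fun t => a (t + (m : ZMod N)) with hb
    have hterm : ∀ i ∈ Finset.range N,
        ((-1:ℤ) ^ ((il N a b (((2*i : ℕ)) : ZMod (2*N))).val +
            (il N a b ((((2*i : ℕ)) : ZMod (2*N)) + ((s+s : ℤ) : ZMod (2*N)))).val)
          + (-1:ℤ) ^ ((il N a b (((2*i+1 : ℕ)) : ZMod (2*N))).val +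
            (il N a b ((((2*i+1 : ℕ)) : ZMod (2*N)) + ((s+s : ℤ) : ZMod (2*N)))).val))
        = (-1:ℤ)^((a (i : ZMod N)).val + (a ((i : ZMod N) + ((s:ℤ) : ZMod N))).val)
          + (-1:ℤ)^((a ((i : ZMod N) + (m : ZMod N))).val
              + (a ((i : ZMod N) + (m : ZMod N) + ((s:ℤ) : ZMod N))).val) := by
      intro i _
      have e1 : (((2*i : ℕ)) : ZMod (2*N)) = ((2*(i:ℤ) : ℤ) : ZMod (2*N)) := by push_cast; ring
      have e2 : (((2*i+1 : ℕ)) : ZMod (2*N)) = ((2*(i:ℤ)+1 : ℤ) : ZMod (2*N)) := by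
        push_cast; ring
      have e3 : ((2*(i:ℤ) : ℤ) : ZMod (2*N)) + ((s+s : ℤ) : ZMod (2*N))
          = ((2*((i:ℤ)+s) : ℤ) : ZMod (2*N)) := by push_cast; ring
      have e4 : ((2*(i:ℤ)+1 : ℤ) : ZMod (2*N)) + ((s+s : ℤ) : ZMod (2*N))
          = ((2*((i:ℤ)+s)+1 : ℤ) : ZMod (2*N)) := by push_cast; ring
      rw [e1, e2, e3, e4, il_even, il_even, il_odd, il_odd]
      have c1 : (((i:ℤ)) : ZMod N) = (i : ZMod N) := by push_cast; ring
      have c2 : ((((i:ℤ)+s : ℤ)) : ZMod N) = (i : ZMod N) + ((s:ℤ) : ZMod N) := by push_cast; ring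
      rw [c1, c2, hb]
      congr 2
      push_cast
      ring
    rw [Finset.sum_congr rfl hterm, Finset.sum_add_distrib]
    have hs2 : ((s + s) / 2 : ℤ) = s := by omega
    rw [hs2, two_mul]
    congr 1
    exact corr_shift a ((m : ZMod N)) (((s:ℤ) : ZMod N))
  · rintro ⟨s, rfl⟩
    rw [corr, sum_range_two_mul]
    set b : ZMod N → ZMod 2 := fun t => a (t + (m : ZMod N)) with hb
    have hterm : ∀ i ∈ Finset.range N,
        ((-1:ℤ) ^ ((il N a b (((2*i : ℕ)) : ZMod (2*N))).val +
            (il N a b ((((2*i : ℕ)) : ZMod (2*N)) + ((2*s+1 : ℤ) : ZMod (2*N)))).val)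
          + (-1:ℤ) ^ ((il N a b (((2*i+1 : ℕ)) : ZMod (2*N))).val +
            (il N a b ((((2*i+1 : ℕ)) : ZMod (2*N)) + ((2*s+1 : ℤ) : ZMod (2*N)))).val))
        = (-1:ℤ)^((a (i : ZMod N)).val + (a ((i : ZMod N) + ((s+m:ℤ) : ZMod N))).val)
          + (-1:ℤ)^((a ((i : ZMod N) + (m : ZMod N))).val
              + (a ((i : ZMod N) + (m : ZMod N) + ((s+1-m:ℤ) : ZMod N))).val) := by
      intro i _
      have e1 : (((2*i : ℕ)) : ZMod (2*N)) = ((2*(i:ℤ) : ℤ) : ZMod (2*N)) := by push_cast; ring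
      have e2 : (((2*i+1 : ℕ)) : ZMod (2*N)) = ((2*(i:ℤ)+1 : ℤ) : ZMod (2*N)) := by
        push_cast; ring
      have e3 : ((2*(i:ℤ) : ℤ) : ZMod (2*N)) + ((2*s+1 : ℤ) : ZMod (2*N))
          = ((2*((i:ℤ)+s)+1 : ℤ) : ZMod (2*N)) := by push_cast; ring
      have e4 : ((2*(i:ℤ)+1 : ℤ) : ZMod (2*N)) + ((2*s+1 : ℤ) : ZMod (2*N))
          = ((2*((i:ℤ)+s+1) : ℤ) : ZMod (2*N)) := by push_cast; ring
      rw [e1, e2, e3, e4, il_even, il_even, il_odd, il_odd]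
      have c1 : (((i:ℤ)) : ZMod N) = (i : ZMod N) := by push_cast; ring
      have c2 : ((((i:ℤ)+s : ℤ)) : ZMod N) + (m : ZMod N)
          = (i : ZMod N) + ((s+m:ℤ) : ZMod N) := by push_cast; ring
      have c3 : ((((i:ℤ)+s+1 : ℤ)) : ZMod N)
          = (i : ZMod N) + (m : ZMod N) + ((s+1-m:ℤ) : ZMod N) := by push_cast; ring
      simp only [hb, c1, c2, c3]
    rw [Finset.sum_congr rfl hterm, Finset.sum_add_distrib]
    have d1 : ((2*s+1-1)/2 + m : ℤ) = s + m := by omega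
    have d2 : ((2*s+1+1)/2 - m : ℤ) = s + 1 - m := by omega
    rw [d1, d2]
    congr 1
    exact corr_shift a ((m : ZMod N)) (((s+1-m:ℤ) : ZMod N))
end

section
/- Let N be odd, a a binary sequence of period N, m = (N+1)/2, and u = a ∥ L^m(a). Then R_u(τ) = 2R_a(τ/2) if τ is even, and R_u(τ) = 2R_a((τ+N)/2) if τ is odd. -/
theorem stmt_9 (N : ℕ) (hN : Odd N) (a : ZMod N → ZMod 2) (τ : ℤ)
    (u : ZMod (2 * N) → ZMod 2)
    (hu : u = il N a (fun t => a (t + (((N + 1) / 2 : ℕ) : ZMod N)))) :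
    (Even τ →
      corr (2 * N) u u (τ : ZMod (2 * N)) = 2 * corr N a a ((τ / 2 : ℤ) : ZMod N)) ∧
    (Odd τ →
      corr (2 * N) u u (τ : ZMod (2 * N)) = 2 * corr N a a (((τ + N) / 2 : ℤ) : ZMod N)) := by
  have hN0 : 0 < N := hN.pos
  haveI : NeZero N := ⟨hN0.ne'⟩
  haveI : NeZero (2 * N) := ⟨by omega⟩
  set m : ℕ := (N + 1) / 2 with hmdef
  -- m + m = 1 in ZMod N
  have hm2 : (m : ZMod N) + (m : ZMod N) = 1 := by
    have h1 : m + m = N + 1 := by obtain ⟨k, hk⟩ := hN; omega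
    have := congrArg (Nat.cast : ℕ → ZMod N) h1
    push_cast at this
    rwa [ZMod.natCast_self, zero_add] at this
  -- value of an integer cast, halved, viewed in ZMod N
  have hhalf : ∀ z : ℤ, (((z : ZMod (2 * N)).val / 2 : ℕ) : ZMod N) = ((z / 2 : ℤ) : ZMod N) := by
    intro z
    have hv : ((z : ZMod (2 * N)).val : ℤ) = z % (2 * N) := ZMod.val_intCast z
    have h1 : (((z : ZMod (2 * N)).val / 2 : ℕ) : ℤ) = (z % (2 * N)) / 2 := by
      rw [Int.natCast_div, hv]; norm_num
    have h2 : z / 2 = (z % (2 * N)) / 2 + (N : ℤ) * (z / (2 * N)) := by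
      have := Int.emod_add_mul_ediv z (2 * N)
      have h3 : z = z % (2 * N) + ((N : ℤ) * (z / (2 * N))) * 2 := by push_cast at this ⊢; linarith
      conv_lhs => rw [h3]
      rw [Int.add_mul_ediv_right _ _ (two_ne_zero)]
    have : ((z / 2 : ℤ) : ZMod N) = (((z % (2 * N)) / 2 : ℤ) : ZMod N) := by
      rw [h2]; push_cast [ZMod.natCast_self]; ring
    rw [this, ← h1, Int.cast_natCast]
  -- parity of the value
  have hpar : ∀ z : ℤ, ((z : ZMod (2 * N)).val % 2 = 0 ↔ z % 2 = 0) := by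
    intro z
    have hv : ((z : ZMod (2 * N)).val : ℤ) = z % (2 * N) := ZMod.val_intCast z
    have : (((z : ZMod (2 * N)).val % 2 : ℕ) : ℤ) = z % 2 := by
      push_cast
      rw [hv, Int.emod_emod_of_dvd z ⟨(N : ℤ), by push_cast; ring⟩]
    omega
  have key_even : ∀ z : ℤ, z % 2 = 0 → u ((z : ℤ) : ZMod (2 * N)) = a ((z / 2 : ℤ) : ZMod N) := by
    intro z hz
    rw [hu]; unfold il
    rw [if_pos ((hpar z).mpr hz), hhalf]
  have key_odd : ∀ z : ℤ, z % 2 = 1 → u ((z : ℤ) : ZMod (2 * N)) = a (((z / 2 : ℤ) : ZMod N) + m) := by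
    intro z hz
    rw [hu]; unfold il
    rw [if_neg (by rw [hpar]; omega), hhalf]
  -- pairing sums
  have pair : ∀ (f : ℕ → ℤ) (M : ℕ), ∑ t ∈ Finset.range (2 * M), f t
      = ∑ i ∈ Finset.range M, (f (2 * i) + f (2 * i + 1)) := by
    intro f M
    induction M with
    | zero => simp
    | succ k ih =>
      have h2 : 2 * (k + 1) = (2 * k + 1) + 1 := by ring
      rw [h2, Finset.sum_range_succ, Finset.sum_range_succ, ih, Finset.sum_range_succ]
      ring
  -- range sum to univ sum over ZMod N
  have huniv : ∀ g : ZMod N → ℤ, ∑ t ∈ Finset.range N, g ((t : ℕ) : ZMod N) = ∑ x : ZMod N, g x := by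
    intro g
    apply Finset.sum_nbij' (fun t => ((t : ℕ) : ZMod N)) (fun x : ZMod N => x.val)
    · intro t _; exact Finset.mem_univ _
    · intro x _; exact Finset.mem_range.mpr (ZMod.val_lt x)
    · intro t ht; exact ZMod.val_cast_of_lt (Finset.mem_range.mp ht)
    · intro x _; exact ZMod.natCast_rightInverse x
    · intro t _; rfl
  have hshift : ∀ (g : ZMod N → ℤ) (d : ZMod N), ∑ x : ZMod N, g (x + d) = ∑ x : ZMod N, g x :=
    fun g d => Fintype.sum_equiv (Equiv.addRight d) _ _ (fun _ => rfl)
  have hcorr : ∀ c : ZMod N, corr N a a c = ∑ x : ZMod N, (-1 : ℤ) ^ ((a x).val + (a (x + c)).val) := by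
    intro c; unfold corr
    exact huniv (fun x => (-1 : ℤ) ^ ((a x).val + (a (x + c)).val))
  -- cast helper for arguments
  have hcastadd : ∀ (t : ℕ), ((t : ZMod (2 * N)) + (τ : ZMod (2 * N))) = (((t : ℤ) + τ : ℤ) : ZMod (2 * N)) := by
    intro t; push_cast; ring
  have hnatint : ∀ (t : ℕ), ((t : ZMod (2 * N))) = (((t : ℤ)) : ZMod (2 * N)) := by
    intro t; push_cast; ring
  constructor
  · -- even case
    intro hτ
    have hτ2 : τ % 2 = 0 := Int.even_iff.mp hτ
    set c : ZMod N := ((τ / 2 : ℤ) : ZMod N) with hc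
    have main : corr (2 * N) u u (τ : ZMod (2 * N))
        = ∑ i ∈ Finset.range N,
            ((-1 : ℤ) ^ ((a ((i : ℕ) : ZMod N)).val + (a (((i : ℕ) : ZMod N) + c)).val)
             + (-1 : ℤ) ^ ((a (((i : ℕ) : ZMod N) + m)).val + (a ((((i : ℕ) : ZMod N) + m) + c)).val)) := by
      unfold corr
      rw [pair]
      apply Finset.sum_congr rfl
      intro i _
      congr 1
      · -- term at 2i
        rw [hcastadd (2 * i), hnatint (2 * i)]
        rw [key_even ((2 * i : ℕ) : ℤ) (by push_cast; omega),
            key_even (((2 * i : ℕ) : ℤ) + τ) (by push_cast; omega)]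
        congr 2
        · congr 1
          have : ((2 * i : ℕ) : ℤ) / 2 = (i : ℤ) := by push_cast; omega
          rw [this]; push_cast; ring
        · rw [hc]
          have : (((2 * i : ℕ) : ℤ) + τ) / 2 = (i : ℤ) + τ / 2 := by push_cast; omega
          rw [this]; push_cast; ring
      · -- term at 2i+1
        rw [hcastadd (2 * i + 1), hnatint (2 * i + 1)]
        rw [key_odd ((2 * i + 1 : ℕ) : ℤ) (by push_cast; omega),
            key_odd (((2 * i + 1 : ℕ) : ℤ) + τ) (by push_cast; omega)]
        congr 2
        · congr 1
          have : ((2 * i + 1 : ℕ) : ℤ) / 2 = (i : ℤ) := by push_cast; omega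
          rw [this]; push_cast; ring
        · rw [hc]
          have : (((2 * i + 1 : ℕ) : ℤ) + τ) / 2 = (i : ℤ) + τ / 2 := by push_cast; omega
          rw [this]; push_cast; ring
    rw [main, Finset.sum_add_distrib,
        huniv (fun x => (-1 : ℤ) ^ ((a x).val + (a (x + c)).val)),
        huniv (fun x => (-1 : ℤ) ^ ((a (x + m)).val + (a ((x + m) + c)).val)),
        hshift (fun x => (-1 : ℤ) ^ ((a x).val + (a (x + c)).val)) m,
        hcorr c]
    ring
  · -- odd case
    intro hτ
    have hτ2 : τ % 2 = 1 := Int.odd_iff.mp hτ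
    set c : ZMod N := ((τ / 2 : ℤ) : ZMod N) + m with hc
    have htarget : (((τ + N) / 2 : ℤ) : ZMod N) = c := by
      have hm1 : ((m : ℕ) : ℤ) = ((N : ℤ) + 1) / 2 := by
        obtain ⟨k, hk⟩ := hN; omega
      have h1 : (τ + N) / 2 = τ / 2 + (m : ℤ) := by omega
      rw [h1, hc]; push_cast; ring
    have main : corr (2 * N) u u (τ : ZMod (2 * N))
        = ∑ i ∈ Finset.range N,
            ((-1 : ℤ) ^ ((a ((i : ℕ) : ZMod N)).val + (a (((i : ℕ) : ZMod N) + c)).val)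
             + (-1 : ℤ) ^ ((a (((i : ℕ) : ZMod N) + m)).val + (a ((((i : ℕ) : ZMod N) + m) + c)).val)) := by
      unfold corr
      rw [pair]
      apply Finset.sum_congr rfl
      intro i _
      congr 1
      · -- term at 2i : u(2i) = a(i), u(2i+τ) = a(i + τ/2 + m)
        rw [hcastadd (2 * i), hnatint (2 * i)]
        rw [key_even ((2 * i : ℕ) : ℤ) (by push_cast; omega),
            key_odd (((2 * i : ℕ) : ℤ) + τ) (by push_cast; omega)]
        congr 2
        · congr 1
          have : ((2 * i : ℕ) : ℤ) / 2 = (i : ℤ) := by push_cast; omega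
          rw [this]; push_cast; ring
        · rw [hc]
          have : (((2 * i : ℕ) : ℤ) + τ) / 2 = (i : ℤ) + τ / 2 := by push_cast; omega
          rw [this]; push_cast; ring
      · -- term at 2i+1 : u(2i+1) = a(i+m), u(2i+1+τ) = a(i + τ/2 + 1) = a((i+m) + (τ/2 + m))
        rw [hcastadd (2 * i + 1), hnatint (2 * i + 1)]
        rw [key_odd ((2 * i + 1 : ℕ) : ℤ) (by push_cast; omega),
            key_even (((2 * i + 1 : ℕ) : ℤ) + τ) (by push_cast; omega)]
        congr 2
        · congr 1
          have : ((2 * i + 1 : ℕ) : ℤ) / 2 = (i : ℤ) := by push_cast; omega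
          rw [this]; push_cast; ring
        · rw [hc]
          have h1 : (((2 * i + 1 : ℕ) : ℤ) + τ) / 2 = (i : ℤ) + τ / 2 + 1 := by push_cast; omega
          rw [h1]
          have : (((i : ℤ) + τ / 2 + 1 : ℤ) : ZMod N)
              = (((i : ℤ) : ZMod N)) + (((τ / 2 : ℤ) : ZMod N)) + ((m : ZMod N) + (m : ZMod N)) := by
            rw [hm2]; push_cast; ring
          rw [this]; push_cast; ring
    rw [htarget, main, Finset.sum_add_distrib,
        huniv (fun x => (-1 : ℤ) ^ ((a x).val + (a (x + c)).val)),
        huniv (fun x => (-1 : ℤ) ^ ((a (x + m)).val + (a ((x + m) + c)).val)),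
        hshift (fun x => (-1 : ℤ) ^ ((a x).val + (a (x + c)).val)) m,
        hcorr c]
    ring
end

section
/- Let N be odd and a, b binary sequences of period N. Then the cross-correlation between the period-2N sequences u = a ∥ L^{(N+1)/2}(ā) and v = b ∥ L^{(N+1)/2}(b) is identically zero: R_{u,v}(τ) = 0 and R_{v,u}(τ) = 0 for all τ. -/
/-! Since `N` is odd, translating an interleaved sequence by `N` swaps its even and odd
positions. With the shift `(N + 1) / 2` this makes `u` antiperiodic, `u (t + N) = 1 - u t`, and
`v` periodic with period `N`, so in both correlations the terms at `t` and `t + N` cancel. -/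

open Finset Function

theorem Function.Antiperiodic.sum_range_two_mul {M : Type*} [AddCommGroup M] {f : ℕ → M}
    {N : ℕ} (hf : Antiperiodic f N) : ∑ t ∈ range (2 * N), f t = 0 := by
  simp [two_mul, sum_range_add, add_comm N, hf _]

theorem neg_one_pow_val_one_sub (y : ZMod 2) : (-1 : ℤ) ^ (1 - y).val = -(-1) ^ y.val := by
  fin_cases y <;> rfl

theorem il_natCast (N : ℕ) (a b : ZMod N → ZMod 2) (t : ℕ) :
    il N a b t = if t % 2 = 0 then a (t / 2 : ℕ) else b (t / 2 : ℕ) := by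
  simp only [il, ZMod.val_natCast, Nat.mod_mul_right_mod, Nat.mod_mul_right_div_self,
    ZMod.natCast_mod]

theorem il_add_odd (k : ℕ) (a b : ZMod (2 * k + 1) → ZMod 2) (x : ZMod (2 * (2 * k + 1))) :
    il (2 * k + 1) a b (x + (2 * k + 1 : ℕ)) =
      il (2 * k + 1) (fun i => b (i + k)) (fun i => a (i + (k + 1 : ℕ))) x := by
  obtain ⟨t, rfl⟩ := ZMod.natCast_zmod_surjective x
  rw [← Nat.cast_add, il_natCast, il_natCast]
  rcases Nat.even_or_odd t with ⟨j, rfl⟩ | ⟨j, rfl⟩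
  · rw [if_neg (by omega), if_pos (by omega), show (j + j + (2 * k + 1)) / 2 = j + k by omega,
      show (j + j) / 2 = j by omega]
    push_cast; rfl
  · rw [if_pos (by omega), if_neg (by omega),
      show (2 * j + 1 + (2 * k + 1)) / 2 = j + (k + 1) by omega, show (2 * j + 1) / 2 = j by omega]
    push_cast; rfl

section Correlation

variable {N : ℕ} {u v : ZMod (2 * N) → ZMod 2}

theorem corr_two_mul_eq_zero_left (hu : ∀ x, u (x + N) = 1 - u x)
    (hv : Periodic v (N : ZMod (2 * N))) (τ : ZMod (2 * N)) : corr (2 * N) u v τ = 0 := by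
  refine Antiperiodic.sum_range_two_mul fun t => ?_
  rw [Nat.cast_add, add_right_comm _ _ τ, hu, hv, pow_add, pow_add, neg_one_pow_val_one_sub,
    neg_mul]

theorem corr_two_mul_eq_zero_right (hu : ∀ x, u (x + N) = 1 - u x)
    (hv : Periodic v (N : ZMod (2 * N))) (τ : ZMod (2 * N)) : corr (2 * N) v u τ = 0 := by
  refine Antiperiodic.sum_range_two_mul fun t => ?_
  rw [Nat.cast_add, add_right_comm _ _ τ, hu, hv, pow_add, pow_add, neg_one_pow_val_one_sub,
    mul_neg]

end Correlation

section Interleaving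

variable {k : ℕ}

theorem add_add_succ_eq_self (i : ZMod (2 * k + 1)) : i + k + (k + 1 : ℕ) = i := by
  rw [add_assoc, ← Nat.cast_add, show k + (k + 1) = 2 * k + 1 by omega, ZMod.natCast_self,
    add_zero]

theorem il_shift_compl_add_odd (a : ZMod (2 * k + 1) → ZMod 2) (x : ZMod (2 * (2 * k + 1))) :
    il (2 * k + 1) a (fun t => 1 - a (t + (k + 1 : ℕ))) (x + (2 * k + 1 : ℕ)) =
      1 - il (2 * k + 1) a (fun t => 1 - a (t + (k + 1 : ℕ))) x := by
  rw [il_add_odd]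
  simp only [il, add_add_succ_eq_self]
  split_ifs <;> simp

theorem periodic_il_shift (b : ZMod (2 * k + 1) → ZMod 2) :
    Periodic (il (2 * k + 1) b (fun t => b (t + (k + 1 : ℕ)))) (2 * k + 1 : ℕ) := fun x => by
  rw [il_add_odd]
  simp only [add_add_succ_eq_self]

end Interleaving

theorem stmt_12 (N : ℕ) (hN : Odd N) (a b : ZMod N → ZMod 2)
    (u v : ZMod (2 * N) → ZMod 2)
    (hu : u = il N a (fun t => 1 - a (t + (((N + 1) / 2 : ℕ) : ZMod N))))
    (hv : v = il N b (fun t => b (t + (((N + 1) / 2 : ℕ) : ZMod N))))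
    (τ : ZMod (2 * N)) :
    corr (2 * N) u v τ = 0 ∧ corr (2 * N) v u τ = 0 := by
  obtain ⟨k, rfl⟩ := hN
  rw [show (2 * k + 1 + 1) / 2 = k + 1 by omega] at hu hv
  subst hu hv
  exact ⟨corr_two_mul_eq_zero_left (il_shift_compl_add_odd a) (periodic_il_shift b) τ,
    corr_two_mul_eq_zero_right (il_shift_compl_add_odd a) (periodic_il_shift b) τ⟩
end

section
/- Let N ≡ 3 (mod 4), and let a, b be binary sequences of period N each with ideal two-level autocorrelation (R_a(τ) = R_b(τ) = -1 for all τ ≢ 0 mod N). Then the interleaved sequence v of period 4N with columns (a, b, L^{(N+1)/2}(ā), L^{(N+1)/2}(b)) has optimal autocorrelation: R_v(0)=4N, R_v(τ)=-4 if τ ≡ 0 (mod 4) and τ ≢ 0 (mod 4N), and R_v(τ)=0 otherwise. -/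
/-- 4-column interleaving: `v(4i+j)` is the `j`-th column evaluated at `i`. -/
def il4 (N : ℕ) (a b c d : ZMod N → ZMod 2) : ZMod (4 * N) → ZMod 2 :=
  fun t => if t.val % 4 = 0 then a ((t.val / 4 : ℕ) : ZMod N)
           else if t.val % 4 = 1 then b ((t.val / 4 : ℕ) : ZMod N)
           else if t.val % 4 = 2 then c ((t.val / 4 : ℕ) : ZMod N)
           else d ((t.val / 4 : ℕ) : ZMod N)
/-!
The correlation of the interleaved sequence at shift `4 * s + r` splits into the four
cross-correlations of its columns, the column index wrapping around with a carry of one step.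
For the columns `a, b, 1 - a (· + h), b (· + h)` with `2 * h = 1` in `ZMod N`, complementing a
column only flips a sign and, because `1 - h = h`, all the shifts by `h` collapse: for `r = 1, 3`
the four terms cancel in pairs, for `r = 2` they leave `2 * (R_b - R_a) (s + h) = 0`, and for
`r = 0` they give `2 * R_a s + 2 * R_b s = -4`.
-/

open Finset

theorem Finset.sum_range_mul_eq_sum_fin {M : Type*} [AddCommMonoid M] (f : ℕ → M) (k n : ℕ) :
    ∑ t ∈ range (k * n), f t = ∑ j : Fin k, ∑ i ∈ range n, f (k * i + j) := by
  induction n with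
  | zero => simp
  | succ n ih =>
    simp only [mul_add_one, sum_range_add, ih, sum_range_succ, sum_add_distrib,
      Fin.sum_univ_eq_sum_range (fun j => f (k * n + j))]

theorem ZMod.sum_range_natCast {N : ℕ} [NeZero N] {M : Type*} [AddCommMonoid M]
    (g : ZMod N → M) :
    ∑ t ∈ range N, g t = ∑ z : ZMod N, g z :=
  sum_nbij' (fun t => (t : ZMod N)) ZMod.val (fun _ _ => mem_univ _)
    (fun z _ => mem_range.2 z.val_lt) (fun _ ht => ZMod.val_cast_of_lt (mem_range.1 ht))
    (fun z _ => ZMod.natCast_zmod_val z) (fun _ _ => rfl)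

theorem ZMod.dvd_val_intCast_iff {k M : ℕ} [NeZero M] (hk : k ∣ M) (τ : ℤ) :
    k ∣ (τ : ZMod M).val ↔ (k : ℤ) ∣ τ := by
  rw [← Int.natCast_dvd_natCast, ZMod.val_intCast, Int.dvd_iff_emod_eq_zero,
    Int.emod_emod_of_dvd _ (Int.natCast_dvd_natCast.2 hk), ← Int.dvd_iff_emod_eq_zero]

section corr

variable {M : ℕ} (x y : ZMod M → ZMod 2)

theorem corr_self_zero : corr M x x 0 = M := by
  have : ∀ z : ZMod 2, (-1 : ℤ) ^ (z.val + z.val) = 1 := by decide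
  simp [corr, this]

@[simp]
theorem corr_one_sub_left (τ : ZMod M) : corr M (fun i => 1 - x i) y τ = -corr M x y τ := by
  have : ∀ z w : ZMod 2, (-1 : ℤ) ^ ((1 - z).val + w.val) = -(-1) ^ (z.val + w.val) := by decide
  simp [corr, this]

@[simp]
theorem corr_one_sub_right (τ : ZMod M) : corr M x (fun i => 1 - y i) τ = -corr M x y τ := by
  have : ∀ z w : ZMod 2, (-1 : ℤ) ^ (z.val + (1 - w).val) = -(-1) ^ (z.val + w.val) := by decide
  simp [corr, this]

@[simp]
theorem corr_comp_add_right (h τ : ZMod M) :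
    corr M x (fun i => y (i + h)) τ = corr M x y (τ + h) := by
  simp only [corr, add_assoc]

theorem corr_eq_sum_univ [NeZero M] (τ : ZMod M) :
    corr M x y τ = ∑ z : ZMod M, (-1 : ℤ) ^ ((x z).val + (y (z + τ)).val) :=
  ZMod.sum_range_natCast (fun z => (-1 : ℤ) ^ ((x z).val + (y (z + τ)).val))

@[simp]
theorem corr_comp_add_left [NeZero M] (h τ : ZMod M) :
    corr M (fun i => x (i + h)) y τ = corr M x y (τ - h) := by
  rw [corr_eq_sum_univ, corr_eq_sum_univ]
  exact Fintype.sum_equiv (Equiv.addRight h) _ _ fun z => by simp [add_assoc]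

end corr

section il4

variable {N : ℕ} (a b c d : ZMod N → ZMod 2)

theorem il4_natCast_four_mul_add (q : ℕ) (j : Fin 4) :
    il4 N a b c d ((4 * q + j : ℕ) : ZMod (4 * N)) = ![a, b, c, d] j q := by
  have hmod : (4 * q + j) % (4 * N) % 4 = j := by
    rw [Nat.mod_mul_right_mod]; omega
  have hdiv : (((4 * q + j) % (4 * N) / 4 : ℕ) : ZMod N) = q := by
    rw [Nat.mod_mul_right_div_self, ZMod.natCast_mod]; congr 1; omega
  simp only [il4, ZMod.val_natCast, hmod, hdiv]
  fin_cases j <;> rfl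

theorem corr_il4_natCast (s : ℕ) (r : Fin 4) :
    corr (4 * N) (il4 N a b c d) (il4 N a b c d) ((4 * s + r : ℕ) : ZMod (4 * N)) =
      ∑ j : Fin 4,
        corr N (![a, b, c, d] j) (![a, b, c, d] (j + r)) ((s + (j + r : ℕ) / 4 : ℕ)) := by
  unfold corr
  rw [sum_range_mul_eq_sum_fin]
  refine sum_congr rfl fun j _ => sum_congr rfl fun i _ => ?_
  have hshift : 4 * i + j + (4 * s + r) = 4 * (i + (s + (j + r : ℕ) / 4)) + (j + r : Fin 4) := by
    rw [Fin.val_add]; omega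
  rw [← Nat.cast_add, hshift, il4_natCast_four_mul_add, il4_natCast_four_mul_add, Nat.cast_add]

end il4

section interleave

variable {N : ℕ} [NeZero N] (a b : ZMod N → ZMod 2) (h : ZMod N)

def interleaveCompShift : ZMod (4 * N) → ZMod 2 :=
  il4 N a b (fun i => 1 - a (i + h)) (fun i => b (i + h))

local notation "w" => interleaveCompShift a b h

theorem corr_interleaveCompShift_four_mul (s : ℕ) :
    corr (4 * N) w w ((4 * s : ℕ) : ZMod (4 * N)) = 2 * corr N a a s + 2 * corr N b b s := by
  rw [interleaveCompShift, show 4 * s = 4 * s + ((0 : Fin 4) : ℕ) from rfl, corr_il4_natCast]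
  simp [Fin.sum_univ_four, two_mul, add_assoc, add_left_comm]

variable {h} (hh : h + h = 1)
include hh

theorem corr_interleaveCompShift_four_mul_add_one (s : ℕ) :
    corr (4 * N) w w ((4 * s + 1 : ℕ) : ZMod (4 * N)) = 0 := by
  rw [interleaveCompShift, show 4 * s + 1 = 4 * s + ((1 : Fin 4) : ℕ) from rfl, corr_il4_natCast]
  simp [Fin.sum_univ_four, add_sub_assoc, sub_eq_of_eq_add hh.symm]

theorem corr_interleaveCompShift_four_mul_add_two (hab : ∀ σ, corr N a a σ = corr N b b σ)
    (s : ℕ) :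
    corr (4 * N) w w ((4 * s + 2 : ℕ) : ZMod (4 * N)) = 0 := by
  rw [interleaveCompShift, show 4 * s + 2 = 4 * s + ((2 : Fin 4) : ℕ) from rfl, corr_il4_natCast]
  simp [Fin.sum_univ_four, add_sub_assoc, sub_eq_of_eq_add hh.symm, hab]

theorem corr_interleaveCompShift_four_mul_add_three (s : ℕ) :
    corr (4 * N) w w ((4 * s + 3 : ℕ) : ZMod (4 * N)) = 0 := by
  rw [interleaveCompShift, show 4 * s + 3 = 4 * s + ((3 : Fin 4) : ℕ) from rfl, corr_il4_natCast]
  simp [Fin.sum_univ_four, add_sub_assoc, sub_eq_of_eq_add hh.symm]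

end interleave

theorem stmt_14 (N : ℕ) (hN : N % 4 = 3) (a b : ZMod N → ZMod 2)
    (ha : ∀ τ : ZMod N, τ ≠ 0 → corr N a a τ = -1)
    (hb : ∀ τ : ZMod N, τ ≠ 0 → corr N b b τ = -1)
    (v : ZMod (4 * N) → ZMod 2)
    (hv : v = il4 N a b (fun i => 1 - a (i + (((N + 1) / 2 : ℕ) : ZMod N)))
                        (fun i => b (i + (((N + 1) / 2 : ℕ) : ZMod N)))) :
    corr (4 * N) v v 0 = 4 * N ∧
    (∀ τ : ℤ, (τ : ZMod (4 * N)) ≠ 0 →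
      ((4 : ℤ) ∣ τ → corr (4 * N) v v (τ : ZMod (4 * N)) = -4) ∧
      (¬ (4 : ℤ) ∣ τ → corr (4 * N) v v (τ : ZMod (4 * N)) = 0)) := by
  have : NeZero N := ⟨by omega⟩
  set h : ZMod N := (((N + 1) / 2 : ℕ) : ZMod N)
  have hh : h + h = 1 := by
    rw [← Nat.cast_add, show (N + 1) / 2 + (N + 1) / 2 = N + 1 by omega, Nat.cast_succ,
      ZMod.natCast_self, zero_add]
  have hab : ∀ σ, corr N a a σ = corr N b b σ := fun σ => by
    by_cases hσ : σ = 0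
    · rw [hσ, corr_self_zero, corr_self_zero]
    · rw [ha σ hσ, hb σ hσ]
  change v = interleaveCompShift a b h at hv
  subst hv
  refine ⟨by rw [corr_self_zero]; push_cast; rfl, fun τ hτ => ?_⟩
  set n := (τ : ZMod (4 * N)).val
  have hn : ((4 * (n / 4) + n % 4 : ℕ) : ZMod (4 * N)) = τ := by
    rw [Nat.div_add_mod]; exact ZMod.natCast_zmod_val _
  have h4 : (4 : ℤ) ∣ τ ↔ n % 4 = 0 := by
    rw [← Nat.dvd_iff_mod_eq_zero, ZMod.dvd_val_intCast_iff (dvd_mul_right 4 N)]; rfl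
  rw [h4, ← hn]
  refine ⟨fun hr => ?_, fun hr => ?_⟩
  · have hs : ((n / 4 : ℕ) : ZMod N) ≠ 0 := fun h0 => hτ <| by
      rw [← hn, hr, add_zero, ZMod.natCast_eq_zero_iff]
      exact Nat.mul_dvd_mul_left 4 ((ZMod.natCast_eq_zero_iff _ _).1 h0)
    rw [hr, add_zero, corr_interleaveCompShift_four_mul, ha _ hs, hb _ hs]
    norm_num
  · obtain hr | hr | hr : n % 4 = 1 ∨ n % 4 = 2 ∨ n % 4 = 3 := by omega
    all_goals rw [hr]
    exacts [corr_interleaveCompShift_four_mul_add_one a b hh _,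
      corr_interleaveCompShift_four_mul_add_two a b hh hab _,
      corr_interleaveCompShift_four_mul_add_three a b hh _]
end

section
/- Let N ≡ 3 (mod 4) and let a, b be binary sequences of period N, with v the interleaved sequence of period 4N with columns (a, b, L^{(N+1)/2}(ā), L^{(N+1)/2}(b)). If R_v(τ) ∈ {-4, 0} for all τ ≢ 0 (mod 4N), then both a and b have ideal autocorrelation, i.e., R_a(τ) = R_b(τ) = -1 for all τ ≢ 0 (mod N). -/
open Finset

lemma corr_eq_sum (M : ℕ) [NeZero M] (x y : ZMod M → ZMod 2) (τ : ZMod M) :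
    corr M x y τ = ∑ t : ZMod M, (-1:ℤ)^((x t).val + (y (t+τ)).val) := by
  rw [corr]
  refine Finset.sum_nbij' (fun t : ℕ => (t : ZMod M)) (fun t : ZMod M => t.val)
    (fun a _ => Finset.mem_univ _) (fun b _ => Finset.mem_range.mpr (ZMod.val_lt b))
    (fun a ha => ZMod.val_natCast_of_lt (Finset.mem_range.mp ha))
    (fun b _ => by simp [ZMod.natCast_val, ZMod.cast_id])
    (fun a _ => rfl)

lemma corr_shift_s15 (M : ℕ) [NeZero M] (x : ZMod M → ZMod 2) (s w : ZMod M) :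
    corr M (fun i => x (i+s)) (fun i => x (i+s)) w = corr M x x w := by
  rw [corr_eq_sum, corr_eq_sum]
  refine Fintype.sum_equiv (Equiv.addRight s) _ _ (fun t => ?_)
  simp only [Equiv.coe_addRight]
  ring_nf

lemma pow_compl (u w : ZMod 2) : (-1:ℤ)^((1-u).val + (1-w).val) = (-1:ℤ)^(u.val+w.val) := by
  revert u w; decide

lemma pow_compl_right (u w : ZMod 2) : (-1:ℤ)^(u.val + (1-w).val) = -(-1:ℤ)^(u.val+w.val) := by
  revert u w; decide

lemma pow_compl_left (u w : ZMod 2) : (-1:ℤ)^((1-u).val + w.val) = -(-1:ℤ)^(u.val+w.val) := by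
  revert u w; decide

/-- complement both arguments -/
lemma corr_compl (M : ℕ) [NeZero M] (x y : ZMod M → ZMod 2) (w : ZMod M) :
    corr M (fun i => 1 - x i) (fun i => 1 - y i) w = corr M x y w := by
  rw [corr_eq_sum, corr_eq_sum]
  exact Finset.sum_congr rfl (fun t _ => pow_compl _ _)

lemma corr_right_shift (M : ℕ) [NeZero M] (x : ZMod M → ZMod 2) (s w : ZMod M) :
    corr M x (fun i => x (i+s)) w = corr M x x (w+s) := by
  rw [corr_eq_sum, corr_eq_sum]
  refine Finset.sum_congr rfl (fun t _ => ?_)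
  rw [add_assoc]

lemma corr_right_compl_shift (M : ℕ) [NeZero M] (x : ZMod M → ZMod 2) (s w : ZMod M) :
    corr M x (fun i => 1 - x (i+s)) w = -corr M x x (w+s) := by
  rw [corr_eq_sum, corr_eq_sum, ← Finset.sum_neg_distrib]
  refine Finset.sum_congr rfl (fun t _ => ?_)
  rw [pow_compl_right, add_assoc]

lemma corr_left_shift (M : ℕ) [NeZero M] (x : ZMod M → ZMod 2) (s w : ZMod M) :
    corr M (fun i => x (i+s)) x w = corr M x x (w-s) := by
  rw [corr_eq_sum, corr_eq_sum]
  refine Fintype.sum_equiv (Equiv.addRight s) _ _ (fun t => ?_)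
  simp only [Equiv.coe_addRight]
  ring_nf

lemma corr_left_compl_shift (M : ℕ) [NeZero M] (x : ZMod M → ZMod 2) (s w : ZMod M) :
    corr M (fun i => 1 - x (i+s)) x w = -corr M x x (w-s) := by
  rw [corr_eq_sum, corr_eq_sum, ← Finset.sum_neg_distrib]
  refine Fintype.sum_equiv (Equiv.addRight s) _ _ (fun t => ?_)
  simp only [Equiv.coe_addRight]
  rw [pow_compl_left]
  ring_nf

lemma sum_range_four_mul (f : ℕ → ℤ) (N : ℕ) :
    ∑ t ∈ range (4*N), f t
      = ∑ i ∈ range N, (f (4*i) + f (4*i+1) + f (4*i+2) + f (4*i+3)) := by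
  induction N with
  | zero => simp
  | succ n ih =>
      rw [Finset.sum_range_succ, ← ih, show 4*(n+1) = 4*n+1+1+1+1 by ring,
        Finset.sum_range_succ, Finset.sum_range_succ, Finset.sum_range_succ,
        Finset.sum_range_succ]
      ring_nf

lemma val_cast4 (N : ℕ) [NeZero N] (k j : ℕ) (hj : j < 4) :
    ((4*k+j : ℕ) : ZMod (4*N)).val = 4*(k % N) + j := by
  haveI : NeZero (4*N) := ⟨by have := Nat.pos_of_ne_zero (NeZero.ne N); omega⟩
  rw [ZMod.val_natCast]
  have hrlt : k % N < N := Nat.mod_lt _ (Nat.pos_of_ne_zero (NeZero.ne N))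
  conv_lhs => rw [← Nat.div_add_mod k N]
  rw [show 4*(N*(k/N) + k%N)+j = 4*(k%N)+j + (k/N)*(4*N) by ring,
    Nat.add_mul_mod_self_right, Nat.mod_eq_of_lt (by omega)]

lemma il4_apply0 (N : ℕ) [NeZero N] (a b c d : ZMod N → ZMod 2) (k : ℕ) :
    il4 N a b c d ((4*k : ℕ) : ZMod (4*N)) = a (k : ZMod N) := by
  have h := val_cast4 N k 0 (by omega)
  rw [show (4*k : ℕ) = 4*k+0 from rfl] at *
  rw [il4, h]
  have h1 : (4*(k % N)+0) % 4 = 0 := by omega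
  have h2 : (4*(k % N)+0) / 4 = k % N := by omega
  rw [h1, h2, if_pos rfl, ZMod.natCast_mod]

lemma il4_apply1 (N : ℕ) [NeZero N] (a b c d : ZMod N → ZMod 2) (k : ℕ) :
    il4 N a b c d ((4*k+1 : ℕ) : ZMod (4*N)) = b (k : ZMod N) := by
  have h := val_cast4 N k 1 (by omega)
  rw [il4, h]
  have h1 : (4*(k % N)+1) % 4 = 1 := by omega
  rw [h1]
  have h2 : (4*(k % N)+1) / 4 = k % N := by omega
  norm_num [h2, ZMod.natCast_mod]

lemma il4_apply2 (N : ℕ) [NeZero N] (a b c d : ZMod N → ZMod 2) (k : ℕ) :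
    il4 N a b c d ((4*k+2 : ℕ) : ZMod (4*N)) = c (k : ZMod N) := by
  have h := val_cast4 N k 2 (by omega)
  rw [il4, h]
  have h1 : (4*(k % N)+2) % 4 = 2 := by omega
  rw [h1]
  have h2 : (4*(k % N)+2) / 4 = k % N := by omega
  norm_num [h2, ZMod.natCast_mod]

lemma il4_apply3 (N : ℕ) [NeZero N] (a b c d : ZMod N → ZMod 2) (k : ℕ) :
    il4 N a b c d ((4*k+3 : ℕ) : ZMod (4*N)) = d (k : ZMod N) := by
  have h := val_cast4 N k 3 (by omega)
  rw [il4, h]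
  have h1 : (4*(k % N)+3) % 4 = 3 := by omega
  rw [h1]
  have h2 : (4*(k % N)+3) / 4 = k % N := by omega
  norm_num [h2, ZMod.natCast_mod]

lemma corr_il4_four (N : ℕ) [NeZero N] (a b c d : ZMod N → ZMod 2) (u : ℕ) :
    corr (4*N) (il4 N a b c d) (il4 N a b c d) ((4*u : ℕ) : ZMod (4*N)) =
      corr N a a (u : ZMod N) + corr N b b (u : ZMod N)
        + corr N c c (u : ZMod N) + corr N d d (u : ZMod N) := by
  simp only [corr]
  rw [sum_range_four_mul, ← Finset.sum_add_distrib, ← Finset.sum_add_distrib,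
    ← Finset.sum_add_distrib]
  refine Finset.sum_congr rfl (fun i _ => ?_)
  rw [show ((4*i:ℕ) : ZMod (4*N)) + ((4*u:ℕ) : ZMod (4*N)) = ((4*(i+u) : ℕ) : ZMod (4*N)) by
        push_cast; ring,
      show ((4*i+1:ℕ) : ZMod (4*N)) + ((4*u:ℕ) : ZMod (4*N)) = ((4*(i+u)+1 : ℕ) : ZMod (4*N)) by
        push_cast; ring,
      show ((4*i+2:ℕ) : ZMod (4*N)) + ((4*u:ℕ) : ZMod (4*N)) = ((4*(i+u)+2 : ℕ) : ZMod (4*N)) by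
        push_cast; ring,
      show ((4*i+3:ℕ) : ZMod (4*N)) + ((4*u:ℕ) : ZMod (4*N)) = ((4*(i+u)+3 : ℕ) : ZMod (4*N)) by
        push_cast; ring]
  simp only [il4_apply0, il4_apply1, il4_apply2, il4_apply3]
  push_cast
  ring

lemma corr_il4_two (N : ℕ) [NeZero N] (a b c d : ZMod N → ZMod 2) (u : ℕ) :
    corr (4*N) (il4 N a b c d) (il4 N a b c d) ((4*u+2 : ℕ) : ZMod (4*N)) =
      corr N a c (u : ZMod N) + corr N b d (u : ZMod N)
        + corr N c a ((u : ZMod N)+1) + corr N d b ((u : ZMod N)+1) := by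
  simp only [corr]
  rw [sum_range_four_mul, ← Finset.sum_add_distrib, ← Finset.sum_add_distrib,
    ← Finset.sum_add_distrib]
  refine Finset.sum_congr rfl (fun i _ => ?_)
  rw [show ((4*i:ℕ) : ZMod (4*N)) + ((4*u+2:ℕ) : ZMod (4*N)) = ((4*(i+u)+2 : ℕ) : ZMod (4*N)) by
        push_cast; ring,
      show ((4*i+1:ℕ) : ZMod (4*N)) + ((4*u+2:ℕ) : ZMod (4*N)) = ((4*(i+u)+3 : ℕ) : ZMod (4*N)) by
        push_cast; ring,
      show ((4*i+2:ℕ) : ZMod (4*N)) + ((4*u+2:ℕ) : ZMod (4*N)) = ((4*(i+u+1) : ℕ) : ZMod (4*N)) by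
        push_cast; ring,
      show ((4*i+3:ℕ) : ZMod (4*N)) + ((4*u+2:ℕ) : ZMod (4*N)) = ((4*(i+u+1)+1 : ℕ) : ZMod (4*N)) by
        push_cast; ring]
  simp only [il4_apply0, il4_apply1, il4_apply2, il4_apply3]
  push_cast
  ring

lemma corr_self_mod (M : ℕ) [NeZero M] (x : ZMod M → ZMod 2) (τ : ZMod M) :
    ∃ m : ℤ, corr M x x τ = M - 4*m := by
  have h1 : ∀ t : ZMod M, (-1:ℤ)^((x t).val + (x (t+τ)).val)
      = 1 - 2*((((x t).val + (x (t+τ)).val) % 2 : ℕ) : ℤ) := by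
    intro t
    rcases Nat.even_or_odd ((x t).val + (x (t+τ)).val) with h | h
    · rw [Even.neg_one_pow h, Nat.even_iff.mp h]; norm_num
    · rw [Odd.neg_one_pow h, Nat.odd_iff.mp h]; norm_num
  have hD : (∑ t : ZMod M, ((x t).val + (x (t+τ)).val) % 2) % 2 = 0 := by
    rw [← Finset.sum_nat_mod]
    have h2 : (∑ t : ZMod M, ((x t).val + (x (t+τ)).val)) = 2 * ∑ t : ZMod M, (x t).val := by
      rw [Finset.sum_add_distrib, two_mul]
      congr 1
      exact Fintype.sum_equiv (Equiv.addRight τ) _ _ (fun t => rfl)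
    rw [h2]
    omega
  obtain ⟨m, hm⟩ : ∃ m, (∑ t : ZMod M, ((x t).val + (x (t+τ)).val) % 2) = 2*m :=
    ⟨(∑ t : ZMod M, ((x t).val + (x (t+τ)).val) % 2)/2, by omega⟩
  refine ⟨(m : ℤ), ?_⟩
  rw [corr_eq_sum]
  calc ∑ t : ZMod M, (-1:ℤ)^((x t).val + (x (t+τ)).val)
      = ∑ t : ZMod M, (1 - 2*((((x t).val + (x (t+τ)).val) % 2 : ℕ) : ℤ)) :=
        Finset.sum_congr rfl (fun t _ => h1 t)
    _ = (Finset.univ.card : ℤ) - 2 * ((∑ t : ZMod M, ((x t).val + (x (t+τ)).val) % 2 : ℕ) : ℤ) := by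
        rw [Finset.sum_sub_distrib, Finset.sum_const, ← Finset.mul_sum, Nat.cast_sum]
        push_cast
        ring
    _ = (M : ℤ) - 4*(m:ℤ) := by
        rw [Finset.card_univ, ZMod.card, hm]
        push_cast
        ring

theorem stmt_15 (N : ℕ) (hN : N % 4 = 3) (a b : ZMod N → ZMod 2)
    (v : ZMod (4 * N) → ZMod 2)
    (hv : v = il4 N a b (fun i => 1 - a (i + (((N + 1) / 2 : ℕ) : ZMod N)))
                        (fun i => b (i + (((N + 1) / 2 : ℕ) : ZMod N))))
    (hopt : ∀ τ : ZMod (4 * N), τ ≠ 0 →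
      corr (4 * N) v v τ = -4 ∨ corr (4 * N) v v τ = 0) :
    ∀ τ : ZMod N, τ ≠ 0 → corr N a a τ = -1 ∧ corr N b b τ = -1 := by
  have hN0 : 0 < N := by omega
  haveI : NeZero N := ⟨by omega⟩
  haveI : NeZero (4*N) := ⟨by omega⟩
  intro τ hτ
  set s : ZMod N := (((N + 1) / 2 : ℕ) : ZMod N) with hs
  have h2s : s + s = 1 := by
    have hnat : ((N+1)/2 + (N+1)/2 : ℕ) = N + 1 := by omega
    rw [hs, ← Nat.cast_add, hnat]
    push_cast
    simp
  set c : ZMod N → ZMod 2 := fun i => 1 - a (i + s) with hc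
  set d : ZMod N → ZMod 2 := fun i => b (i + s) with hd
  -- mod 4 facts
  obtain ⟨mA, hmA⟩ := corr_self_mod N a τ
  obtain ⟨mB, hmB⟩ := corr_self_mod N b τ
  -- part 1 : shift 4τ
  have hu : ((τ.val : ℕ) : ZMod N) = τ := by simp [ZMod.natCast_val, ZMod.cast_id]
  have hvlt : τ.val < N := ZMod.val_lt τ
  have hvne : τ.val ≠ 0 := fun h => hτ ((ZMod.val_eq_zero τ).mp h)
  have hne4 : ((4*τ.val : ℕ) : ZMod (4*N)) ≠ 0 := by
    intro h
    have h' := congrArg ZMod.val h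
    rw [ZMod.val_natCast, Nat.mod_eq_of_lt (by omega), ZMod.val_zero] at h'
    omega
  have h1 := hopt _ hne4
  rw [hv, corr_il4_four, hu] at h1
  have hcc : corr N c c τ = corr N a a τ :=
    (corr_compl N (fun i => a (i+s)) (fun i => a (i+s)) τ).trans (corr_shift_s15 N a s τ)
  have hdd : corr N d d τ = corr N b b τ := corr_shift_s15 N b s τ
  rw [hcc, hdd] at h1
  -- part 2 : shift 4(τ-s)+2
  have hu2 : (((τ-s).val : ℕ) : ZMod N) = τ - s := by simp [ZMod.natCast_val, ZMod.cast_id]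
  have hvlt2 : (τ-s).val < N := ZMod.val_lt _
  have hne2 : ((4*(τ-s).val+2 : ℕ) : ZMod (4*N)) ≠ 0 := by
    intro h
    have h' := congrArg ZMod.val h
    rw [ZMod.val_natCast, Nat.mod_eq_of_lt (by omega), ZMod.val_zero] at h'
    omega
  have h2 := hopt _ hne2
  rw [hv, corr_il4_two, hu2] at h2
  have hac : corr N a c (τ-s) = -corr N a a τ := by
    have h := corr_right_compl_shift N a s (τ-s)
    rwa [show τ - s + s = τ by ring] at h
  have hbd : corr N b d (τ-s) = corr N b b τ := by
    have h := corr_right_shift N b s (τ-s)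
    rwa [show τ - s + s = τ by ring] at h
  have hca : corr N c a (τ-s+1) = -corr N a a τ := by
    have h := corr_left_compl_shift N a s (τ-s+1)
    rwa [show τ - s + 1 - s = τ by rw [← h2s]; ring] at h
  have hdb : corr N d b (τ-s+1) = corr N b b τ := by
    have h := corr_left_shift N b s (τ-s+1)
    rwa [show τ - s + 1 - s = τ by rw [← h2s]; ring] at h
  rw [hac, hbd, hca, hdb] at h2
  -- finish by integer arithmetic
  rcases h1 with h1 | h1 <;> rcases h2 with h2 | h2 <;>
    exact ⟨by omega, by omega⟩
end
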